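/- Let $X$ be any $(4N+1) \times (4N+1)$ real positive semidefinite matrix with $X_{00} = 1$, $X_{ii} = X_{0i}$ for $i \in [4N]$, and $X_{ij} = 0$ whenever $i$ and $j$ are adjacent in $Ci_{4N}(1, 2N)$. Then $\sum_{i=1}^{4N} X_{ii} \leq N(1 + \cos(\pi/(2N)))$. -/

import Mathlib

/-
Let `z` and `gᵢ` (`i < 4N`) be Gram vectors of `X`. Then `⟪z, gᵢ⟫ = ‖gᵢ‖²`, so with
`S = ∑ ‖gᵢ‖²` and `T = ∑ gᵢ` we get `S = ⟪z, T⟫ ≤ ‖T‖`, and it suffices to show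
`‖T‖² ≤ N (1 + cos (π / 2N)) S`.
Split along the shift by `2N`: `wᵢ = gᵢ + g_{i+2N}` is `2N`-periodic, `dᵢ = (-1)ⁱ (gᵢ - g_{i+2N})`
is `2N`-antiperiodic, both have `∑ ‖·‖² = S`, and orthogonality along the edges gives
`⟪wᵢ, w_{i+1}⟫ = ⟪dᵢ, d_{i+1}⟫`. Cauchy–Schwarz on `∑ (wᵢ + w_{i+1}) = 2T` bounds `‖T‖²` by
`N (S + ∑ ⟪wᵢ, w_{i+1}⟫)`, and the top of the spectrum of the antiperiodic cycle bounds
`∑ ⟪dᵢ, d_{i+1}⟫ ≤ cos (π / 2N) S`.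
For an `n`-antiperiodic `x`, write `xⱼ = sⱼ uⱼ` with the positive eigenvector
`sⱼ = sin ((2j + 1) π / 2n)`. Then `cos (π / n) ∑ ‖xⱼ‖² - ∑ ⟪xⱼ, x_{j+1}⟫` is half of
`∑ sⱼ s_{j+1} ‖uⱼ - u_{j+1}‖²`, where only the last weight, `-s₀²`, is negative. Cauchy–Schwarz
along the remaining path pays for that edge, since the path's effective resistance
`∑ 1 / (sⱼ s_{j+1})` is exactly `1 / s₀²`.
-/

open Finset Real RealInnerProductSpace Matrix

open scoped ComplexOrder MatrixOrder in
theorem Matrix.PosSemidef.exists_eq_gram {𝕜 n : Type*} [RCLike 𝕜] [Fintype n]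
    {A : Matrix n n 𝕜} (hA : A.PosSemidef) : ∃ v : n → EuclideanSpace 𝕜 n, A = gram 𝕜 v := by
  classical
  obtain ⟨B, rfl⟩ := CStarAlgebra.nonneg_iff_eq_star_mul_self.mp hA.nonneg
  refine ⟨fun i => WithLp.toLp 2 fun k => B k i, ?_⟩
  ext i j
  simp [gram_apply, PiLp.inner_apply, Matrix.mul_apply, mul_comm]

theorem Finset.sum_range_succ_eq_of_apply_eq {M : Type*} [AddCancelCommMonoid M] (n : ℕ)
    (f : ℕ → M) (h : f n = f 0) : ∑ i ∈ range n, f (i + 1) = ∑ i ∈ range n, f i := by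
  rw [← add_left_inj (f 0), ← sum_range_succ', sum_range_succ, h]

theorem Finset.sum_range_add_self {M : Type*} [AddCommMonoid M] (n : ℕ) (f : ℕ → M) :
    ∑ i ∈ range (n + n), f i = ∑ i ∈ range n, (f i + f (i + n)) := by
  rw [sum_range_add, sum_add_distrib]
  simp only [add_comm n]

section Normed

variable {E : Type*} [SeminormedAddCommGroup E]

theorem norm_sum_sq_le_sum_inv_mul_sum_mul {ι : Type*} (s : Finset ι) (w : ι → ℝ)
    (hw : ∀ i ∈ s, 0 < w i) (v : ι → E) :
    ‖∑ i ∈ s, v i‖ ^ 2 ≤ (∑ i ∈ s, (w i)⁻¹) * ∑ i ∈ s, w i * ‖v i‖ ^ 2 := by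
  refine (pow_le_pow_left₀ (norm_nonneg _) (norm_sum_le s v) 2).trans ?_
  refine sum_sq_le_sum_mul_sum_of_sq_le_mul s (fun i hi => (inv_pos.2 (hw i hi)).le)
    (fun i hi => by have := hw i hi; positivity) fun i hi => ?_
  rw [inv_mul_cancel_left₀ (hw i hi).ne']

theorem norm_sub_sq_le_sum_inv_mul (m : ℕ) (w : ℕ → ℝ) (hw : ∀ j < m, 0 < w j) (u : ℕ → E) :
    ‖u 0 - u m‖ ^ 2 ≤ (∑ j ∈ range m, (w j)⁻¹) * ∑ j ∈ range m, w j * ‖u j - u (j + 1)‖ ^ 2 := by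
  rw [← sum_range_sub' u m]
  exact norm_sum_sq_le_sum_inv_mul_sum_mul _ w (fun j hj => hw j (mem_range.1 hj)) _

end Normed

-- The positive eigenvector, for the top eigenvalue `cos (π / n)`, of `x ↦ (x_{j-1} + x_{j+1}) / 2`
-- on sequences with `x_{j+n} = -x_j`.
noncomputable def sineWeight (n j : ℕ) : ℝ := sin ((2 * j + 1) * (π / (2 * n)))

theorem sineWeight_pos {n j : ℕ} (hj : j < n) : 0 < sineWeight n j := by
  have hn : (0 : ℝ) < n := by exact_mod_cast (j.zero_le.trans_lt hj)
  have hj' : (2 * j + 1 : ℝ) < 2 * n := by exact_mod_cast (by omega : 2 * j + 1 < 2 * n)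
  apply sin_pos_of_pos_of_lt_pi (by positivity)
  calc (2 * j + 1 : ℝ) * (π / (2 * n)) < 2 * n * (π / (2 * n)) := by gcongr
    _ = π := by field_simp

theorem sineWeight_add_self {n : ℕ} (hn : n ≠ 0) (j : ℕ) :
    sineWeight n (j + n) = -sineWeight n j := by
  rw [sineWeight, sineWeight, ← sin_add_pi]
  congr 1
  push_cast
  field_simp
  ring

theorem sineWeight_add_sineWeight (n j : ℕ) :
    sineWeight n j + sineWeight n (j + 2) = 2 * cos (π / n) * sineWeight n (j + 1) := by
  rw [show π / n = 2 * (π / (2 * n)) by ring]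
  simp only [sineWeight]
  push_cast
  generalize π / (2 * n) = φ
  rw [show (2 * (j : ℝ) + 1) * φ = (2 * (j + 1) + 1) * φ - 2 * φ by ring,
    show (2 * ((j : ℝ) + 2) + 1) * φ = (2 * (j + 1) + 1) * φ + 2 * φ by ring, sin_sub, sin_add]
  ring

theorem sineWeight_sub_one {n : ℕ} (hn : n ≠ 0) : sineWeight n (n - 1) = sineWeight n 0 := by
  rw [sineWeight, sineWeight, ← sin_pi_sub]
  congr 1
  push_cast [Nat.one_le_iff_ne_zero.2 hn]
  field_simp
  ring

theorem sum_inv_sineWeight_mul_succ {n : ℕ} (hn : 2 ≤ n) :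
    ∑ j ∈ range (n - 1), (sineWeight n j * sineWeight n (j + 1))⁻¹ = (sineWeight n 0 ^ 2)⁻¹ := by
  set φ := π / (2 * n) with hφ
  have hn' : (2 : ℝ) ≤ n := by exact_mod_cast hn
  have hφ_pos : 0 < φ := by positivity
  have hφ_lt : 2 * φ < π := by
    rw [hφ, mul_div_assoc', div_lt_iff₀ (by positivity)]; nlinarith [pi_pos]
  have hsin : 0 < sin (2 * φ) := sin_pos_of_pos_of_lt_pi (by positivity) hφ_lt
  -- `1 / (sin a sin b) = (cot a - cot b) / sin (b - a)`, and here `b - a = 2 φ` throughout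
  let cot (j : ℕ) : ℝ := cos ((2 * j + 1) * φ) / sineWeight n j
  have hstep : ∀ j ∈ range (n - 1),
      (sineWeight n j * sineWeight n (j + 1))⁻¹ = (cot j - cot (j + 1)) / sin (2 * φ) := by
    intro j hj
    have h0 := (sineWeight_pos (show j < n by have := mem_range.1 hj; omega)).ne'
    have h1 := (sineWeight_pos (show j + 1 < n by have := mem_range.1 hj; omega)).ne'
    simp only [cot, sineWeight, ← hφ] at h0 h1 ⊢
    push_cast at h0 h1 ⊢
    rw [eq_div_iff hsin.ne', show 2 * φ = (2 * (j + 1) + 1) * φ - (2 * j + 1) * φ by ring,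
      sin_sub]
    generalize (2 * (j + 1 : ℝ) + 1) * φ = b at h1 ⊢
    generalize (2 * (j : ℝ) + 1) * φ = a at h0 ⊢
    field_simp
  have hlast : (2 * ((n - 1 : ℕ) : ℝ) + 1) * φ = π - φ := by
    rw [hφ]; push_cast [show 1 ≤ n by omega]; field_simp; ring
  rw [sum_congr rfl hstep, ← sum_div, sum_range_sub' cot, sin_two_mul]
  simp only [cot, sineWeight, ← hφ, hlast, sin_pi_sub, cos_pi_sub, Nat.cast_zero, mul_zero,
    zero_add, one_mul]
  have hs : sin φ ≠ 0 := (sin_pos_of_pos_of_lt_pi hφ_pos (by linarith)).ne'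
  have hc : cos φ ≠ 0 := (cos_pos_of_mem_Ioo ⟨by linarith, by linarith⟩).ne'
  field_simp
  ring

section InnerProduct

variable {E : Type*} [NormedAddCommGroup E] [InnerProductSpace ℝ E]

theorem sum_mul_inner_succ_eq_of_antiperiodic (n : ℕ) (c : ℝ) (s : ℕ → ℝ) (u : ℕ → E)
    (hs : ∀ j, s j + s (j + 2) = 2 * c * s (j + 1)) (hs_anti : ∀ j, s (j + n) = -s j)
    (hu : u n = u 0) :
    ∑ j ∈ range n, s j * s (j + 1) * ⟪u j, u (j + 1)⟫ =
      c * ∑ j ∈ range n, s j ^ 2 * ‖u j‖ ^ 2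
        - (∑ j ∈ range n, s j * s (j + 1) * ‖u j - u (j + 1)‖ ^ 2) / 2 := by
  have hs₀ : s n = -s 0 := by simpa using hs_anti 0
  have hs₁ : s (n + 1) = -s 1 := by simpa [add_comm] using hs_anti 1
  have hshift₁ := sum_range_succ_eq_of_apply_eq n (fun j => s j * s (j + 1) * ‖u j‖ ^ 2) (by
    simp only [hu, hs₀, hs₁]; ring)
  have hshift₂ := sum_range_succ_eq_of_apply_eq n (fun j => s j ^ 2 * ‖u j‖ ^ 2) (by
    simp only [hu, hs₀]; ring)
  have hpolar : ∑ j ∈ range n, s j * s (j + 1) * ⟪u j, u (j + 1)⟫ =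
      ∑ j ∈ range n, (s j * s (j + 1) * ‖u j‖ ^ 2 + s j * s (j + 1) * ‖u (j + 1)‖ ^ 2) / 2
        - (∑ j ∈ range n, s j * s (j + 1) * ‖u j - u (j + 1)‖ ^ 2) / 2 := by
    rw [sum_div, ← sum_sub_distrib]
    refine sum_congr rfl fun j _ => ?_
    rw [norm_sub_sq_real]
    ring
  have hrec : ∑ j ∈ range n, (s (j + 1) * s (j + 2) * ‖u (j + 1)‖ ^ 2
      + s j * s (j + 1) * ‖u (j + 1)‖ ^ 2) =
        2 * c * ∑ j ∈ range n, s (j + 1) ^ 2 * ‖u (j + 1)‖ ^ 2 := by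
    rw [mul_sum]
    refine sum_congr rfl fun j _ => ?_
    linear_combination s (j + 1) * ‖u (j + 1)‖ ^ 2 * hs j
  rw [hpolar, ← sum_div, sum_add_distrib, ← hshift₁, ← sum_add_distrib, hrec, hshift₂]
  ring

theorem sum_inner_succ_le_cos_mul_sum_norm_sq (n : ℕ) (x : ℕ → E) (hx : x n = -x 0) :
    ∑ i ∈ range n, ⟪x i, x (i + 1)⟫ ≤ cos (π / n) * ∑ i ∈ range n, ‖x i‖ ^ 2 := by
  obtain _ | _ | n := n
  · simp
  · simp [hx]
  rw [show n + 1 + 1 = n + 2 from rfl] at hx ⊢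
  set s := sineWeight (n + 2)
  have hs_pos : ∀ j < n + 2, 0 < s j := fun j hj => sineWeight_pos hj
  have hs_last : s (n + 2) = -s 0 := by
    simpa using sineWeight_add_self (n := n + 2) (by omega) 0
  have hs_ne : ∀ j ≤ n + 2, s j ≠ 0 := by
    intro j hj
    obtain hj | rfl := hj.lt_or_eq
    · exact (hs_pos j hj).ne'
    · simpa [hs_last] using (hs_pos 0 (by omega)).ne'
  let u : ℕ → E := fun j => (s j)⁻¹ • x j
  have hx_eq : ∀ j ≤ n + 2, x j = s j • u j := fun j hj =>
    (smul_inv_smul₀ (hs_ne j hj) _).symm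
  have hu : u (n + 2) = u 0 := by
    simp only [u, hx, hs_last, inv_neg, neg_smul, smul_neg, neg_neg]
  have hinner : ∑ i ∈ range (n + 2), ⟪x i, x (i + 1)⟫ =
      ∑ i ∈ range (n + 2), s i * s (i + 1) * ⟪u i, u (i + 1)⟫ := by
    refine sum_congr rfl fun i hi => ?_
    have hi := mem_range.1 hi
    rw [hx_eq i hi.le, hx_eq (i + 1) hi, real_inner_smul_left, real_inner_smul_right, mul_assoc]
  have hnorm : ∑ i ∈ range (n + 2), ‖x i‖ ^ 2 = ∑ i ∈ range (n + 2), s i ^ 2 * ‖u i‖ ^ 2 := by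
    refine sum_congr rfl fun i hi => ?_
    rw [hx_eq i (mem_range.1 hi).le, norm_smul, mul_pow, Real.norm_eq_abs, sq_abs]
  -- The last edge has weight `s (n + 1) * s (n + 2) = -s 0 ^ 2`.
  have henergy : 0 ≤ ∑ j ∈ range (n + 2), s j * s (j + 1) * ‖u j - u (j + 1)‖ ^ 2 := by
    have hres := norm_sub_sq_le_sum_inv_mul (n + 1) (fun j => s j * s (j + 1))
      (fun j hj => mul_pos (hs_pos j (by omega)) (hs_pos (j + 1) (by omega))) u
    have hsum : ∑ j ∈ range (n + 1), (s j * s (j + 1))⁻¹ = (s 0 ^ 2)⁻¹ :=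
      sum_inv_sineWeight_mul_succ (n := n + 2) (by omega)
    rw [hsum] at hres
    have hs_pen : s (n + 1) = s 0 := sineWeight_sub_one (n := n + 2) (by omega)
    rw [sum_range_succ, hs_pen, hs_last, hu, norm_sub_rev]
    have h0 := hs_pos 0 (by omega)
    rw [le_inv_mul_iff₀ (by positivity)] at hres
    linarith
  rw [hinner, hnorm, sum_mul_inner_succ_eq_of_antiperiodic (n + 2) _ s u
    (sineWeight_add_sineWeight _) (sineWeight_add_self (by omega)) hu]
  linarith

theorem two_mul_norm_sum_sq_le_of_periodic (m : ℕ) (w : ℕ → E) (hw : w m = w 0) :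
    2 * ‖∑ i ∈ range m, w i‖ ^ 2 ≤
      m * (∑ i ∈ range m, ‖w i‖ ^ 2 + ∑ i ∈ range m, ⟪w i, w (i + 1)⟫) := by
  have hsum : ∑ i ∈ range m, (w i + w (i + 1)) = (2 : ℝ) • ∑ i ∈ range m, w i := by
    rw [sum_add_distrib, sum_range_succ_eq_of_apply_eq m w hw, two_smul]
  have hnorm : ∑ i ∈ range m, ‖w i + w (i + 1)‖ ^ 2 =
      2 * (∑ i ∈ range m, ‖w i‖ ^ 2 + ∑ i ∈ range m, ⟪w i, w (i + 1)⟫) := by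
    have hshift := sum_range_succ_eq_of_apply_eq m (fun i => ‖w i‖ ^ 2) (by simp only [hw])
    simp only [norm_add_sq_real, sum_add_distrib, ← mul_sum, hshift]
    ring
  have hcs := norm_sum_sq_le_sum_inv_mul_sum_mul (range m) (fun _ => (1 : ℝ)) (by simp)
    fun i => w i + w (i + 1)
  simp only [inv_one, sum_const, card_range, nsmul_eq_mul, mul_one, one_mul, hsum, hnorm,
    norm_smul, Real.norm_ofNat, mul_pow] at hcs
  linarith

theorem norm_sum_sq_le_of_mobius (N : ℕ) (g : ℕ → E) (hg : g (4 * N) = g 0)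
    (h₁ : ∀ i, ⟪g i, g (i + 1)⟫ = 0) (h₂ : ∀ i, ⟪g i, g (i + 2 * N)⟫ = 0) :
    ‖∑ i ∈ range (4 * N), g i‖ ^ 2 ≤
      N * (1 + cos (π / (2 * N))) * ∑ i ∈ range (4 * N), ‖g i‖ ^ 2 := by
  let w (i : ℕ) : E := g i + g (i + 2 * N)
  let d (i : ℕ) : E := (-1 : ℝ) ^ i • (g i - g (i + 2 * N))
  have hsum : ∑ i ∈ range (4 * N), g i = ∑ i ∈ range (2 * N), w i := by
    rw [show 4 * N = 2 * N + 2 * N by ring, sum_range_add_self]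
  have hw_norm : ∑ i ∈ range (4 * N), ‖g i‖ ^ 2 = ∑ i ∈ range (2 * N), ‖w i‖ ^ 2 := by
    rw [show 4 * N = 2 * N + 2 * N by ring, sum_range_add_self]
    refine sum_congr rfl fun i _ => ?_
    rw [norm_add_sq_real, h₂]; ring
  have hd_norm : ∑ i ∈ range (4 * N), ‖g i‖ ^ 2 = ∑ i ∈ range (2 * N), ‖d i‖ ^ 2 := by
    rw [show 4 * N = 2 * N + 2 * N by ring, sum_range_add_self]
    refine sum_congr rfl fun i _ => ?_
    rw [norm_smul, mul_pow, norm_pow, norm_neg, norm_one, one_pow, one_pow, one_mul,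
      norm_sub_sq_real, h₂]
    ring
  have hwd : ∀ i, ⟪w i, w (i + 1)⟫ = ⟪d i, d (i + 1)⟫ := fun i => by
    have hsign : (-1 : ℝ) ^ i * (-1) ^ (i + 1) = -1 := by
      rw [← pow_add]; exact Odd.neg_one_pow ⟨i, by ring⟩
    have h₁' := h₁ (i + 2 * N)
    rw [show i + 2 * N + 1 = i + 1 + 2 * N by ring] at h₁'
    have hd :
        ⟪d i, d (i + 1)⟫ = -⟪g i - g (i + 2 * N), g (i + 1) - g (i + 1 + 2 * N)⟫ := by
      rw [real_inner_smul_left, real_inner_smul_right, ← mul_assoc, hsign, neg_one_mul]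
    rw [hd]
    simp only [w, inner_add_left, inner_add_right, inner_sub_left, inner_sub_right]
    linear_combination (2 : ℝ) * (h₁ i + h₁')
  have hw_per : w (2 * N) = w 0 := by
    simp only [w, show 2 * N + 2 * N = 4 * N by ring, hg, zero_add, add_comm]
  have hd_anti : d (2 * N) = -d 0 := by
    simp only [d, show 2 * N + 2 * N = 4 * N by ring, hg, zero_add, pow_zero, one_smul,
      pow_mul, neg_one_sq, one_pow, neg_sub]
  have hW := two_mul_norm_sum_sq_le_of_periodic (2 * N) w hw_per
  have hD := sum_inner_succ_le_cos_mul_sum_norm_sq (2 * N) d hd_anti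
  simp only [hwd] at hW
  rw [← hsum, ← hw_norm] at hW
  rw [← hd_norm] at hD
  push_cast at hW hD
  linarith [mul_le_mul_of_nonneg_left hD N.cast_nonneg]

theorem sum_norm_sq_le_of_mobius (N : ℕ) (z : E) (g : ℕ → E) (hz : ‖z‖ ≤ 1)
    (hz_inner : ∀ i, ⟪z, g i⟫ = ‖g i‖ ^ 2) (hg : g (4 * N) = g 0)
    (h₁ : ∀ i, ⟪g i, g (i + 1)⟫ = 0) (h₂ : ∀ i, ⟪g i, g (i + 2 * N)⟫ = 0) :
    ∑ i ∈ range (4 * N), ‖g i‖ ^ 2 ≤ N * (1 + cos (π / (2 * N))) := by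
  set S := ∑ i ∈ range (4 * N), ‖g i‖ ^ 2
  set T := ∑ i ∈ range (4 * N), g i
  have hS : S = ⟪z, T⟫ := by simp only [S, T, inner_sum, hz_inner]
  have hS_le : S ≤ ‖T‖ :=
    hS ▸ (real_inner_le_norm z T).trans (mul_le_of_le_one_left (norm_nonneg _) hz)
  have hS_nonneg : 0 ≤ S := sum_nonneg fun i _ => sq_nonneg _
  have ha : 0 ≤ (N : ℝ) * (1 + cos (π / (2 * N))) :=
    mul_nonneg N.cast_nonneg (by linarith [neg_one_le_cos (π / (2 * N))])
  nlinarith [pow_le_pow_left₀ hS_nonneg hS_le 2, norm_sum_sq_le_of_mobius N g hg h₁ h₂]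

end InnerProduct

theorem theta_SDP_mobius_upper_bound (N : ℕ)
    (X : Matrix (Fin 1 ⊕ Fin (4 * N)) (Fin 1 ⊕ Fin (4 * N)) ℝ)
    (hX : X.PosSemidef)
    (h00 : X (Sum.inl 0) (Sum.inl 0) = 1)
    (hdiag : ∀ i, X (Sum.inr i) (Sum.inr i) = X (Sum.inl 0) (Sum.inr i))
    (hadj : ∀ i j : Fin (4 * N),
      ((i.val + 1) % (4 * N) = j.val ∨ (j.val + 1) % (4 * N) = i.val ∨
        (i.val + 2 * N) % (4 * N) = j.val) →
      X (Sum.inr i) (Sum.inr j) = 0) :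
    ∑ i, X (Sum.inr i) (Sum.inr i) ≤ (N : ℝ) * (1 + Real.cos (Real.pi / (2 * N))) := by
  rcases N.eq_zero_or_pos with rfl | hN
  · simp
  obtain ⟨v, rfl⟩ := hX.exists_eq_gram
  simp only [gram_apply] at h00 hdiag hadj ⊢
  let g (i : ℕ) := v (Sum.inr ⟨i % (4 * N), Nat.mod_lt i (by omega)⟩)
  have hsum : ∑ i, ⟪v (Sum.inr i), v (Sum.inr i)⟫ = ∑ i ∈ range (4 * N), ‖g i‖ ^ 2 := by
    rw [← Fin.sum_univ_eq_sum_range (fun i => ‖g i‖ ^ 2)]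
    refine sum_congr rfl fun i _ => ?_
    simp [g, Nat.mod_eq_of_lt i.isLt]
  rw [hsum]
  refine sum_norm_sq_le_of_mobius N (v (Sum.inl 0)) g ?_ (fun i => ?_) (by simp [g])
    (fun i => hadj _ _ (.inl (Nat.mod_add_mod i _ 1)))
    (fun i => hadj _ _ (.inr (.inr (Nat.mod_add_mod i _ (2 * N)))))
  · rw [real_inner_self_eq_norm_sq, pow_eq_one_iff_of_nonneg (norm_nonneg _) two_ne_zero] at h00
    exact h00.le
  · rw [← real_inner_self_eq_norm_sq]
    exact (hdiag _).symm
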